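/- arXiv:2001.00548 — 9 statements merged into one kernel-verified Lean document; each statement's English description precedes it below -/
import Mathlib

section
/- A uniformly locally bounded space X is complete if and only if every closed bounded subset of X is complete. -/
open Filter Set

/-- A bornology on `X` (paper's convention): contains singletons, closed under
subsets, and under unions of two intersecting members. -/
structure IsBornology (X : Type*) (𝔅 : Set (Set X)) : Prop where
  singleton_mem : ∀ x : X, {x} ∈ 𝔅
  mem_of_subset : ∀ A ∈ 𝔅, ∀ B : Set X, B ⊆ A → B ∈ 𝔅
  union_mem : ∀ A ∈ 𝔅, ∀ B ∈ 𝔅, (A ∩ B).Nonempty → A ∪ B ∈ 𝔅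

/-- The image `E[A] = {y | ∃ x ∈ A, (x, y) ∈ E}` of a set under an entourage. -/
def entImage {X : Type*} (E : Set (X × X)) (A : Set X) : Set X :=
  {y | ∃ x ∈ A, (x, y) ∈ E}

/-- A uniformly locally bounded space: a uniform space with a bornology admitting
a bounded uniform entourage `E` (i.e. `E[B]` is bounded for every bounded `B`). -/
structure IsULB (X : Type*) [UniformSpace X] (𝔅 : Set (Set X)) : Prop where
  born : IsBornology X 𝔅
  bounded_entourage : ∃ E ∈ uniformity X, ∀ A ∈ 𝔅, entImage E A ∈ 𝔅

/-!
A Cauchy filter contains an `E`-small set `S`, where `E` is the bounded entourage. Picking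
`x ∈ S` gives `S ⊆ E[{x}]` and `closure S ⊆ E[S]`, so `closure S` is a closed bounded set in the
filter; by hypothesis it is complete, and the filter converges.
-/

open scoped Uniformity

theorem subset_entImage_singleton {X : Type*} {E : Set (X × X)} {S : Set X} {x : X}
    (hx : x ∈ S) (hS : S ×ˢ S ⊆ E) : S ⊆ entImage E {x} :=
  fun _ hy => ⟨x, rfl, hS ⟨hx, hy⟩⟩

theorem closure_subset_entImage {X : Type*} [UniformSpace X] {E : Set (X × X)}
    (hE : E ∈ 𝓤 X) (S : Set X) : closure S ⊆ entImage E S := by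
  intro y hy
  obtain ⟨x, hxy, hxS⟩ :=
    UniformSpace.mem_closure_iff_ball.mp hy (symm_le_uniformity hE)
  exact ⟨x, hxS, hxy⟩

theorem IsULB.exists_isClosed_mem_of_cauchy {X : Type*} [UniformSpace X] {𝔅 : Set (Set X)}
    (h : IsULB X 𝔅) {f : Filter X} (hf : Cauchy f) : ∃ A ∈ 𝔅, IsClosed A ∧ A ∈ f := by
  obtain ⟨E, hE, hE𝔅⟩ := h.bounded_entourage
  obtain ⟨S, hSf, hSE⟩ := mem_prod_same_iff.mp (hf.2 hE)
  obtain ⟨x, hx⟩ := hf.1.nonempty_of_mem hSf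
  have hS𝔅 : S ∈ 𝔅 := h.born.mem_of_subset _ (hE𝔅 _ (h.born.singleton_mem x)) _
    (subset_entImage_singleton hx hSE)
  exact ⟨closure S, h.born.mem_of_subset _ (hE𝔅 _ hS𝔅) _ (closure_subset_entImage hE S),
    isClosed_closure, mem_of_superset hSf subset_closure⟩

/-- A uniformly locally bounded space is complete if and only if every closed
bounded subset is complete. -/
theorem complete_iff_closed_bounded_complete {X : Type*} [UniformSpace X]
    {𝔅 : Set (Set X)} (h : IsULB X 𝔅) :
    CompleteSpace X ↔ ∀ A ∈ 𝔅, IsClosed A → IsComplete A := by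
  refine ⟨fun _ A _ hA => hA.isComplete, fun hcomplete => ⟨fun {f} hf => ?_⟩⟩
  obtain ⟨A, hA𝔅, hAclosed, hAf⟩ := h.exists_isClosed_mem_of_cauchy hf
  obtain ⟨x, -, hx⟩ := hcomplete A hA𝔅 hAclosed f hf (le_principal_iff.mpr hAf)
  exact ⟨x, hx⟩
end

section
/- If a uniformly locally bounded space X is connected as a topological space, then its bornology is connected: the union of any two bounded sets is bounded. -/
open Filter Set

/-! Two points `x, y` are linked when `{x, y}` is bounded. This relation is transitive (glue the
pairs along `y`) and holds for `y` in the neighbourhood `E[x]` of `x`, `E` a bounded entourage, so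
on a connected space it links every pair of points. Two nonempty bounded sets `A ∋ a`, `B ∋ b`
are then glued along the bounded pair `{a, b}`. -/

namespace IsBornology

variable {X : Type*} {𝔅 : Set (Set X)}

theorem pair_mem_trans (h : IsBornology X 𝔅) {x y z : X} (hxy : {x, y} ∈ 𝔅) (hyz : {y, z} ∈ 𝔅) :
    {x, z} ∈ 𝔅 :=
  h.mem_of_subset _ (h.union_mem _ hxy _ hyz ⟨y, by simp⟩) _ (by grind)

theorem union_mem_of_forall_pair_mem (h : IsBornology X 𝔅) (hpair : ∀ x y : X, {x, y} ∈ 𝔅)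
    {A B : Set X} (hA : A ∈ 𝔅) (hB : B ∈ 𝔅) : A ∪ B ∈ 𝔅 := by
  rcases A.eq_empty_or_nonempty with rfl | ⟨a, ha⟩
  · simpa using hB
  rcases B.eq_empty_or_nonempty with rfl | ⟨b, hb⟩
  · simpa using hA
  have hAab : A ∪ {a, b} ∈ 𝔅 := h.union_mem _ hA _ (hpair a b) ⟨a, ha, by simp⟩
  have hAabB : (A ∪ {a, b}) ∪ B ∈ 𝔅 := h.union_mem _ hAab _ hB ⟨b, by simp, hb⟩
  exact h.mem_of_subset _ hAabB _ (union_subset_union_left B subset_union_left)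

end IsBornology

namespace IsULB

variable {X : Type*} [UniformSpace X] {𝔅 : Set (Set X)}

theorem eventually_pair_mem (h : IsULB X 𝔅) (x : X) : ∀ᶠ y in nhds x, {x, y} ∈ 𝔅 := by
  obtain ⟨E, hE, hEbdd⟩ := h.bounded_entourage
  filter_upwards [UniformSpace.ball_mem_nhds x hE] with y hy
  refine h.born.mem_of_subset _ (hEbdd _ (h.born.singleton_mem x)) _ ?_
  rintro z (rfl | rfl)
  · exact ⟨z, rfl, refl_mem_uniformity hE⟩
  · exact ⟨x, rfl, hy⟩

theorem pair_mem [PreconnectedSpace X] (h : IsULB X 𝔅) (x y : X) : {x, y} ∈ 𝔅 :=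
  PreconnectedSpace.induction₂' (fun x y ↦ {x, y} ∈ 𝔅)
    (fun x ↦ (h.eventually_pair_mem x).mono fun y hy ↦ ⟨hy, pair_comm x y ▸ hy⟩)
    ⟨fun _ _ _ ↦ h.born.pair_mem_trans⟩ x y

end IsULB

/-- If a uniformly locally bounded space is connected as a topological space, then
its bornology is connected: the union of any two bounded sets is bounded. -/
theorem bornology_connected_of_connectedSpace {X : Type*} [UniformSpace X]
    {𝔅 : Set (Set X)} (h : IsULB X 𝔅) [ConnectedSpace X] :
    ∀ A ∈ 𝔅, ∀ B ∈ 𝔅, A ∪ B ∈ 𝔅 := by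
  exact fun _ hA _ hB ↦ h.born.union_mem_of_forall_pair_mem h.pair_mem hA hB
end

section
/- Let X be a uniformly locally bounded space and let ℰ be the set of endomorphisms of X (maps that are uniformly continuous on bounded sets and send bounded sets to bounded sets). Then composition (g, h) ↦ g ∘ h is jointly continuous on ℰ × ℰ when ℰ carries the topology of uniform convergence on bounded sets. -/
open Filter Set UniformConvergence
open Topology

/-- An endomorphism of a uniformly locally bounded space: uniformly continuous on
every bounded set, and modest (sends bounded sets to bounded sets). -/
def IsEndo {X : Type*} [UniformSpace X] (𝔅 : Set (Set X)) (f : X → X) : Prop :=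
  (∀ A ∈ 𝔅, UniformContinuous fun x : A => f x) ∧ ∀ A ∈ 𝔅, f '' A ∈ 𝔅

set_option maxHeartbeats 1000000 in
/-- Composition of endomorphisms is jointly continuous for the topology of uniform
convergence on bounded sets. -/
theorem continuous_comp_endos {X : Type*} [UniformSpace X] {𝔅 : Set (Set X)}
    (h : IsULB X 𝔅) :
    Continuous fun p : {f : X →ᵤ[𝔅] X // IsEndo 𝔅 (UniformOnFun.toFun 𝔅 f)} ×
        {f : X →ᵤ[𝔅] X // IsEndo 𝔅 (UniformOnFun.toFun 𝔅 f)} =>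
      UniformOnFun.ofFun 𝔅 (UniformOnFun.toFun 𝔅 p.1.1 ∘ UniformOnFun.toFun 𝔅 p.2.1) := by
  rw [continuous_iff_continuousAt]
  rintro ⟨⟨g₀, hg₀⟩, ⟨h₀, hh₀⟩⟩
  rw [ContinuousAt, UniformOnFun.tendsto_iff_tendstoUniformlyOn]
  intro A hA E hE
  obtain ⟨E₀, hE₀u, hE₀b⟩ := h.bounded_entourage
  obtain ⟨E', hE', hEcomp⟩ := comp_mem_uniformity_sets hE
  -- the bounded set on which we need `g` to be close to `g₀`
  set B : Set X := UniformOnFun.toFun 𝔅 h₀ '' A with hBdef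
  have hB : B ∈ 𝔅 := hh₀.2 A hA
  set B' : Set X := entImage E₀ B with hB'def
  have hB' : B' ∈ 𝔅 := hE₀b B hB
  have hBB' : B ⊆ B' := fun y hy => ⟨y, hy, refl_mem_uniformity hE₀u⟩
  -- uniform continuity of `g₀` on `B'`
  have hgUC := hg₀.1 B' hB' hE'
  rw [uniformity_subtype, mem_map, mem_comap] at hgUC
  obtain ⟨D, hD, hDsub⟩ := hgUC
  have hD' : D ∩ E₀ ∈ uniformity X := inter_mem hD hE₀u
  -- two basic neighborhoods
  have hUg : {g : X →ᵤ[𝔅] X | ∀ x ∈ B',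
      (UniformOnFun.toFun 𝔅 g₀ x, UniformOnFun.toFun 𝔅 g x) ∈ E'} ∈ 𝓝 g₀ :=
    UniformOnFun.gen_mem_nhds X 𝔅 g₀ hB' hE'
  have hUh : {h' : X →ᵤ[𝔅] X | ∀ x ∈ A,
      (UniformOnFun.toFun 𝔅 h₀ x, UniformOnFun.toFun 𝔅 h' x) ∈ D ∩ E₀} ∈ 𝓝 h₀ :=
    UniformOnFun.gen_mem_nhds X 𝔅 h₀ hA hD'
  have hc1 : Continuous fun p : {f : X →ᵤ[𝔅] X // IsEndo 𝔅 (UniformOnFun.toFun 𝔅 f)} ×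
      {f : X →ᵤ[𝔅] X // IsEndo 𝔅 (UniformOnFun.toFun 𝔅 f)} => p.1.1 :=
    continuous_subtype_val.comp continuous_fst
  have hc2 : Continuous fun p : {f : X →ᵤ[𝔅] X // IsEndo 𝔅 (UniformOnFun.toFun 𝔅 f)} ×
      {f : X →ᵤ[𝔅] X // IsEndo 𝔅 (UniformOnFun.toFun 𝔅 f)} => p.2.1 :=
    continuous_subtype_val.comp continuous_snd
  filter_upwards [hc1.continuousAt.preimage_mem_nhds hUg,
    hc2.continuousAt.preimage_mem_nhds hUh] with q hq1 hq2 x hx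
  -- now estimate
  have hy₀B : UniformOnFun.toFun 𝔅 h₀ x ∈ B := ⟨x, hx, rfl⟩
  have hyD := hq2 x hx
  have hyB' : UniformOnFun.toFun 𝔅 q.2.1 x ∈ B' :=
    ⟨UniformOnFun.toFun 𝔅 h₀ x, hy₀B, hyD.2⟩
  have step1 : (UniformOnFun.toFun 𝔅 g₀ (UniformOnFun.toFun 𝔅 h₀ x),
      UniformOnFun.toFun 𝔅 g₀ (UniformOnFun.toFun 𝔅 q.2.1 x)) ∈ E' :=
    hDsub (a := (⟨_, hBB' hy₀B⟩, ⟨_, hyB'⟩)) hyD.1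
  have step2 : (UniformOnFun.toFun 𝔅 g₀ (UniformOnFun.toFun 𝔅 q.2.1 x),
      UniformOnFun.toFun 𝔅 q.1.1 (UniformOnFun.toFun 𝔅 q.2.1 x)) ∈ E' :=
    hq1 _ hyB'
  exact hEcomp ⟨_, step1, step2⟩
end

section
/- Let X be a uniformly locally bounded space. The group Aut(X) of bijections g such that g and g⁻¹ are both modest and uniformly continuous on bounded sets is a topological group for the topology of uniform biconvergence on bounded sets. -/
open Filter Set UniformConvergence

theorem IsEndo.comp {X : Type*} [UniformSpace X] {𝔅 : Set (Set X)} {f g : X → X}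
    (hf : IsEndo 𝔅 f) (hg : IsEndo 𝔅 g) : IsEndo 𝔅 (f ∘ g) := by
  refine ⟨fun A hA => ?_, fun A hA => ?_⟩
  · have h1 : UniformContinuous fun x : A =>
        (⟨g x, Set.mem_image_of_mem g x.2⟩ : g '' A) :=
      (hg.1 A hA).subtype_mk _
    exact (hf.1 (g '' A) (hg.2 A hA)).comp h1
  · rw [Set.image_comp]
    exact hf.2 _ (hg.2 A hA)

theorem isEndo_id {X : Type*} [UniformSpace X] {𝔅 : Set (Set X)} : IsEndo 𝔅 (id : X → X) :=
  ⟨fun _ _ => uniformContinuous_subtype_val, fun A hA => by simpa using hA⟩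

/-- The group of automorphisms of a uniformly locally bounded space: bijections `g`
such that `g` and `g⁻¹` are both modest and uniformly continuous on bounded sets. -/
def ulbAut (X : Type*) [UniformSpace X] (𝔅 : Set (Set X)) : Subgroup (Equiv.Perm X) where
  carrier := {g | IsEndo 𝔅 ⇑g ∧ IsEndo 𝔅 ⇑g.symm}
  one_mem' := ⟨isEndo_id, isEndo_id⟩
  mul_mem' := fun {a b} ha hb => ⟨ha.1.comp hb.1, hb.2.comp ha.2⟩
  inv_mem' := fun {a} ha => ⟨ha.2, ha.1⟩

/-- The uniform structure of uniform biconvergence on bounded sets on `ulbAut X 𝔅`: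
the one induced by `g ↦ (g, g⁻¹)` into `(X →ᵤ[𝔅] X) × (X →ᵤ[𝔅] X)`. -/
instance ulbAutUniformSpace (X : Type*) [UniformSpace X] (𝔅 : Set (Set X)) :
    UniformSpace ↥(ulbAut X 𝔅) :=
  UniformSpace.comap
    (fun g => (UniformOnFun.ofFun 𝔅 ⇑g.1, UniformOnFun.ofFun 𝔅 ⇑g.1.symm))
    inferInstance

/-!
Inversion is continuous because it swaps the two components of `g ↦ (g, g⁻¹)`. For composition
near `(f₀, g₀)` and a bounded set `A`: once `g` is `E`-close to `g₀` on `A` (with `E` a bounded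
entourage), `g` maps `A` into the bounded set `E[g₀ A]`, on which `f` is uniformly close to `f₀` and
`f₀` is uniformly continuous; so `f ∘ g` is close to `f₀ ∘ g` and hence to `f₀ ∘ g₀` on `A`.
-/

open scoped Uniformity Topology

namespace UniformOnFun

theorem continuousAt_comp {α β γ : Type*} [UniformSpace β] [UniformSpace γ]
    {𝔖 : Set (Set α)} {𝔗 : Set (Set β)} {E : Set (β × β)} (hE : E ∈ 𝓤 β) {f₀ : β → γ}
    {g₀ : α → β} (hf₀ : ∀ B ∈ 𝔗, UniformContinuousOn f₀ B)
    (hg₀ : ∀ A ∈ 𝔖, entImage E (g₀ '' A) ∈ 𝔗) :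
    ContinuousAt (fun p : (β →ᵤ[𝔗] γ) × (α →ᵤ[𝔖] β) => ofFun 𝔖 (toFun 𝔗 p.1 ∘ toFun 𝔖 p.2))
      (ofFun 𝔗 f₀, ofFun 𝔖 g₀) := by
  rw [ContinuousAt, UniformOnFun.tendsto_iff_tendstoUniformlyOn]
  intro A hA V hV
  set B := entImage E (g₀ '' A)
  have hB : B ∈ 𝔗 := hg₀ A hA
  have hf := UniformOnFun.tendsto_iff_tendstoUniformlyOn.mp
    (continuous_fst.tendsto (ofFun 𝔗 f₀, ofFun 𝔖 g₀)) B hB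
  have hg := UniformOnFun.tendsto_iff_tendstoUniformlyOn.mp
    (continuous_snd.tendsto (ofFun 𝔗 f₀, ofFun 𝔖 g₀)) A hA
  have hgB : ∀ᶠ p in 𝓝 (ofFun 𝔗 f₀, ofFun 𝔖 g₀), ∀ x ∈ A, toFun 𝔖 p.2 x ∈ B :=
    (hg E hE).mono fun p hp x hx => ⟨g₀ x, mem_image_of_mem g₀ hx, hp x hx⟩
  have hf₀g := (hf₀ B hB).comp_tendstoUniformlyOn_eventually hgB
    (fun x hx => ⟨g₀ x, mem_image_of_mem g₀ hx, refl_mem_uniformity hE⟩) hg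
  obtain ⟨V', hV', hV'V⟩ := comp_mem_uniformity_sets hV
  filter_upwards [hf₀g V' hV', hf V' hV', hgB] with p hf₀gp hfp hgp x hx
  exact hV'V (SetRel.prodMk_mem_comp (hf₀gp x hx) (hfp _ (hgp x hx)))

end UniformOnFun

namespace ulbAut

variable {X : Type*} [UniformSpace X] {𝔅 : Set (Set X)}

def toUniformOnFunProd (g : ulbAut X 𝔅) : (X →ᵤ[𝔅] X) × (X →ᵤ[𝔅] X) :=
  (UniformOnFun.ofFun 𝔅 ⇑g.1, UniformOnFun.ofFun 𝔅 ⇑g.1.symm)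

theorem isInducing_toUniformOnFunProd : Topology.IsInducing (toUniformOnFunProd (𝔅 := 𝔅)) :=
  ⟨UniformSpace.toTopologicalSpace_comap⟩

theorem continuous_ofFun : Continuous fun g : ulbAut X 𝔅 => UniformOnFun.ofFun 𝔅 ⇑g.1 :=
  continuous_fst.comp isInducing_toUniformOnFunProd.continuous

theorem continuous_inv : Continuous fun g : ulbAut X 𝔅 => g⁻¹ :=
  isInducing_toUniformOnFunProd.continuous_iff.mpr <|
    continuous_swap.comp isInducing_toUniformOnFunProd.continuous

theorem continuous_ofFun_mul (h : IsULB X 𝔅) :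
    Continuous fun p : ulbAut X 𝔅 × ulbAut X 𝔅 => UniformOnFun.ofFun 𝔅 ⇑(p.1 * p.2).1 := by
  obtain ⟨E, hE, hE𝔅⟩ := h.bounded_entourage
  refine continuous_iff_continuousAt.mpr fun p => ?_
  refine (UniformOnFun.continuousAt_comp hE ?_ ?_).comp_of_eq
    (continuous_ofFun.prodMap continuous_ofFun).continuousAt rfl
  · exact fun B hB => uniformContinuousOn_iff_restrict.mpr (p.1.2.1.1 B hB)
  · exact fun A hA => hE𝔅 _ (p.2.2.1.2 A hA)

end ulbAut

/-- `ulbAut X 𝔅` is a topological group for the topology of uniform biconvergence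
on bounded sets. -/
theorem ulbAut_topologicalGroup {X : Type*} [UniformSpace X] {𝔅 : Set (Set X)}
    (h : IsULB X 𝔅) : IsTopologicalGroup ↥(ulbAut X 𝔅) := by
  have hmul : Continuous fun p : ulbAut X 𝔅 × ulbAut X 𝔅 => p.1 * p.2 := by
    refine ulbAut.isInducing_toUniformOnFunProd.continuous_iff.mpr
      ((ulbAut.continuous_ofFun_mul h).prodMk ?_)
    -- the second component of `g * h` is the first component of `h⁻¹ * g⁻¹`
    exact (ulbAut.continuous_ofFun_mul h).comp
      ((ulbAut.continuous_inv.comp continuous_snd).prodMk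
        (ulbAut.continuous_inv.comp continuous_fst))
  exact { continuous_mul := hmul, continuous_inv := ulbAut.continuous_inv }
end

section
/- Let X be a uniformly locally bounded space. The group Autulb(X) with the topology of uniform biconvergence on bounded sets is Hausdorff if and only if X is Hausdorff. -/
open Filter Set UniformConvergence

/-! A permutation moving every point only within its inseparability class is uniformly
continuous and inseparable from the identity in `X →ᵤ[𝔅] X`, since it becomes the identity
on the separation quotient; it is modest because it maps a bounded `A` into `E[A]` for a
bounded entourage `E`. If `X` is not Hausdorff, the transposition of two distinct
inseparable points is such a permutation, so `ulbAut X 𝔅` is not Hausdorff. Conversely,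
`ulbAut X 𝔅` embeds into `(X →ᵤ[𝔅] X)²`, which is Hausdorff when `X` is because the
bounded sets cover `X`. -/

open Topology SeparationQuotient

theorem Equiv.swap_apply_inseparable {X : Type*} [TopologicalSpace X] [DecidableEq X]
    {x y : X} (hxy : Inseparable x y) (a : X) : Inseparable (Equiv.swap x y a) a := by
  rw [Equiv.swap_apply_def]
  split_ifs with hx hy
  · exact hx ▸ hxy.symm
  · exact hy ▸ hxy
  · rfl

theorem Equiv.symm_apply_inseparable {X : Type*} [TopologicalSpace X] {g : Equiv.Perm X}
    (hg : ∀ a, Inseparable (g a) a) (a : X) : Inseparable (g.symm a) a := by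
  simpa using (hg (g.symm a)).symm

theorem UniformContinuous.of_forall_inseparable {α β : Type*} [UniformSpace α] [UniformSpace β]
    {f g : α → β} (hg : UniformContinuous g) (hfg : ∀ a, Inseparable (f a) (g a)) :
    UniformContinuous f := by
  have hmk : mk ∘ f = mk ∘ g := funext fun a => mk_eq_mk.2 (hfg a)
  rw [isUniformInducing_mk.uniformContinuous_iff, hmk]
  exact uniformContinuous_mk.comp hg

theorem UniformOnFun.inseparable_ofFun {α β : Type*} [UniformSpace β] (𝔖 : Set (Set α))
    {f g : α → β} (hfg : ∀ a, Inseparable (f a) (g a)) :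
    Inseparable (ofFun 𝔖 f) (ofFun 𝔖 g) := by
  rw [← (UniformOnFun.postcomp_isUniformInducing (𝔖 := 𝔖)
    isUniformInducing_mk).isInducing.inseparable_iff]
  have hmk : mk ∘ f = mk ∘ g := funext fun a => mk_eq_mk.2 (hfg a)
  simp only [Function.comp_apply, toFun_ofFun, hmk]
  rfl

theorem IsBornology.sUnion_eq_univ {X : Type*} {𝔅 : Set (Set X)} (h : IsBornology X 𝔅) :
    ⋃₀ 𝔅 = univ :=
  eq_univ_of_forall fun x => ⟨{x}, h.singleton_mem x, rfl⟩

section ULB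

variable {X : Type*} [UniformSpace X] {𝔅 : Set (Set X)}

theorem IsULB.image_mem_of_forall_inseparable (h : IsULB X 𝔅) {f : X → X}
    (hf : ∀ a, Inseparable (f a) a) {A : Set X} (hA : A ∈ 𝔅) : f '' A ∈ 𝔅 := by
  obtain ⟨E, hE, hEbdd⟩ := h.bounded_entourage
  refine h.born.mem_of_subset _ (hEbdd A hA) _ ?_
  rintro _ ⟨a, ha, rfl⟩
  exact ⟨a, ha, mem_ker.1 (inseparable_iff_ker_uniformity.1 (hf a).symm) E hE⟩

theorem IsULB.isEndo_of_forall_inseparable (h : IsULB X 𝔅) {f : X → X}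
    (hf : ∀ a, Inseparable (f a) a) : IsEndo 𝔅 f :=
  ⟨fun _ _ => (uniformContinuous_id.of_forall_inseparable hf).comp uniformContinuous_subtype_val,
    fun _ hA => h.image_mem_of_forall_inseparable hf hA⟩

theorem IsULB.mem_ulbAut_of_forall_inseparable (h : IsULB X 𝔅) {g : Equiv.Perm X}
    (hg : ∀ a, Inseparable (g a) a) : g ∈ ulbAut X 𝔅 :=
  ⟨h.isEndo_of_forall_inseparable hg,
    h.isEndo_of_forall_inseparable (Equiv.symm_apply_inseparable hg)⟩

theorem isEmbedding_ulbAut :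
    IsEmbedding fun g : ulbAut X 𝔅 =>
      (UniformOnFun.ofFun 𝔅 ⇑g.1, UniformOnFun.ofFun 𝔅 ⇑g.1.symm) :=
  ⟨⟨UniformSpace.toTopologicalSpace_comap⟩, fun _ _ hg =>
    Subtype.ext <| Equiv.coe_fn_injective <| (UniformOnFun.ofFun 𝔅).injective congr($hg.1)⟩

theorem ulbAut.inseparable_one_of_forall_inseparable (g : ulbAut X 𝔅)
    (hg : ∀ a, Inseparable (g.1 a) a) : Inseparable g 1 := by
  rw [← isEmbedding_ulbAut.isInducing.inseparable_iff]
  exact (UniformOnFun.inseparable_ofFun 𝔅 hg).prod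
    (UniformOnFun.inseparable_ofFun 𝔅 (Equiv.symm_apply_inseparable hg))

end ULB

/-- `ulbAut X 𝔅` with the topology of uniform biconvergence on bounded sets is
Hausdorff if and only if `X` is Hausdorff. -/
theorem ulbAut_t2_iff {X : Type*} [UniformSpace X] {𝔅 : Set (Set X)}
    (h : IsULB X 𝔅) : T2Space ↥(ulbAut X 𝔅) ↔ T2Space X := by
  constructor
  · intro _
    classical
    rw [R1Space.t2Space_iff_t0Space, t0Space_iff_inseparable]
    intro x y hxy
    have hswap := Equiv.swap_apply_inseparable hxy
    let σ : ulbAut X 𝔅 := ⟨Equiv.swap x y, h.mem_ulbAut_of_forall_inseparable hswap⟩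
    have hσ : σ = 1 := (ulbAut.inseparable_one_of_forall_inseparable σ hswap).eq
    simpa [σ] using congr(($hσ.symm).1 x)
  · intro _
    have := UniformOnFun.t2Space_of_covering (β := X) h.born.sUnion_eq_univ
    exact isEmbedding_ulbAut.t2Space
end

section
/- Let X be a uniformly locally bounded space and G a subgroup of Autulb(X). If the uniform structure admits a basis of G-invariant entourages and the bornology admits a basis of G-invariant bounded sets, then G (with the topology of uniform biconvergence on bounded sets) is SIN: it has a basis of conjugation-invariant identity neighborhoods. -/
open Filter Set UniformConvergence

/-! A basic identity neighbourhood for uniform biconvergence on bounded sets consists of the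
permutations `g` that move every point of `A`, under `g` and under `g⁻¹`, `E`-close, where `A` is a
finite union of bounded sets and `E` an entourage. Enlarging each bounded set to a `G`-invariant
one and shrinking `E` to a `G`-invariant entourage gives a smaller basic neighbourhood, and it is
conjugation-invariant because `g E_{A,E} g⁻¹ ⊆ E_{gA, gE} = E_{A,E}`. -/

open Topology Uniformity

/-- Unlike `UniformOnFun.hasBasis_nhds`, this needs no directedness of `𝔖`. -/
theorem UniformOnFun.hasBasis_nhds_sUnion {α β : Type*} [UniformSpace β] (𝔖 : Set (Set α))
    (f : α →ᵤ[𝔖] β) :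
    (𝓝 f).HasBasis (fun TV : Set (Set α) × Set (β × β) => TV.1.Finite ∧ TV.1 ⊆ 𝔖 ∧ TV.2 ∈ 𝓤 β)
      fun TV => {g | ∀ x ∈ ⋃₀ TV.1, (toFun 𝔖 f x, toFun 𝔖 g x) ∈ TV.2} := by
  have hbasis : ∀ s : 𝔖, (⨅ V ∈ 𝓤 β,
      𝓟 {g : α →ᵤ[𝔖] β | ∀ x ∈ (s : Set α), (toFun 𝔖 f x, toFun 𝔖 g x) ∈ V}).HasBasis
        (· ∈ 𝓤 β) fun V => {g | ∀ x ∈ (s : Set α), (toFun 𝔖 f x, toFun 𝔖 g x) ∈ V} :=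
    fun s => hasBasis_biInf_principal (fun V hV W hW => ⟨V ∩ W, inter_mem hV hW,
      fun _ hg x hx => (hg x hx).1, fun _ hg x hx => (hg x hx).2⟩) ⟨univ, univ_mem⟩
  rw [UniformOnFun.nhds_eq, iInf_subtype']
  refine (HasBasis.iInf' hbasis).to_hasBasis ?_ ?_
  · rintro ⟨I, V⟩ ⟨hI, hV⟩
    refine ⟨(Subtype.val '' I, ⋂ i ∈ I, V i), ⟨hI.image _, image_subset_iff.2 fun i _ => i.2,
      (biInter_mem hI).2 hV⟩, fun g hg => mem_iInter₂.2 fun i hi x hx => ?_⟩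
    exact mem_iInter₂.1 (hg x ⟨i, mem_image_of_mem _ hi, hx⟩) i hi
  · rintro ⟨T, V⟩ ⟨hT, hT𝔖, hV⟩
    refine ⟨(Subtype.val ⁻¹' T, fun _ => V), ⟨hT.preimage Subtype.val_injective.injOn,
      fun _ _ => hV⟩, fun g hg x ⟨s, hs, hx⟩ => ?_⟩
    exact mem_iInter₂.1 hg ⟨s, hT𝔖 hs⟩ hs x hx

theorem Set.image_conj_eq_of_forall_conj_mem {G : Type*} [Group G] {V : Set G}
    (hV : ∀ g, ∀ k ∈ V, g * k * g⁻¹ ∈ V) (g : G) : (fun k => g * k * g⁻¹) '' V = V := by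
  refine (image_subset_iff.2 fun k hk => hV g k hk).antisymm fun k hk => ?_
  exact ⟨g⁻¹ * k * g, by simpa using hV g⁻¹ k hk, by group⟩

namespace Equiv.Perm

variable {X : Type*}

/-- The paper's `E_{A,E}`, as a set of permutations. -/
def biconvSet (A : Set X) (E : Set (X × X)) : Set (Perm X) :=
  {g | (∀ x ∈ A, (x, g x) ∈ E) ∧ ∀ x ∈ A, (x, g⁻¹ x) ∈ E}

theorem biconvSet_mono {A A' : Set X} {E E' : Set (X × X)} (hA : A' ⊆ A) (hE : E ⊆ E') :
    biconvSet A E ⊆ biconvSet A' E' :=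
  fun _ hg => ⟨fun x hx => hE (hg.1 x (hA hx)), fun x hx => hE (hg.2 x (hA hx))⟩

theorem conj_mem_biconvSet {A : Set X} {E : Set (X × X)} (g : Perm X) {k : Perm X}
    (hk : k ∈ biconvSet A E) : g * k * g⁻¹ ∈ biconvSet (g '' A) (Prod.map g g '' E) := by
  refine ⟨?_, ?_⟩ <;> rintro _ ⟨y, hy, rfl⟩
  · exact ⟨(y, k y), hk.1 y hy, by simp⟩
  · exact ⟨(y, k⁻¹ y), hk.2 y hy, by simp [mul_assoc]⟩

end Equiv.Perm

open Equiv.Perm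

theorem ulbAut_hasBasis_nhds_one (X : Type*) [UniformSpace X] (𝔅 : Set (Set X)) :
    (𝓝 (1 : ulbAut X 𝔅)).HasBasis
      (fun TE : Set (Set X) × Set (X × X) => TE.1.Finite ∧ TE.1 ⊆ 𝔅 ∧ TE.2 ∈ 𝓤 X)
      fun TE => {g | g.1 ∈ biconvSet (⋃₀ TE.1) TE.2} := by
  have hone : (UniformOnFun.ofFun 𝔅 ⇑(1 : ulbAut X 𝔅).1,
      UniformOnFun.ofFun 𝔅 ⇑(1 : ulbAut X 𝔅).1.symm) =
      (UniformOnFun.ofFun 𝔅 id, UniformOnFun.ofFun 𝔅 id) := rfl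
  rw [nhds_induced, hone, nhds_prod_eq]
  exact ((UniformOnFun.hasBasis_nhds_sUnion 𝔅 (UniformOnFun.ofFun 𝔅 id)).prod_self.comap _)

theorem ulbAut_subgroup_hasBasis_nhds_one {X : Type*} [UniformSpace X] {𝔅 : Set (Set X)}
    (G : Subgroup (ulbAut X 𝔅)) :
    (𝓝 (1 : G)).HasBasis
      (fun TE : Set (Set X) × Set (X × X) => TE.1.Finite ∧ TE.1 ⊆ 𝔅 ∧ TE.2 ∈ 𝓤 X)
      fun TE => {g | g.1.1 ∈ biconvSet (⋃₀ TE.1) TE.2} := by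
  rw [nhds_subtype]
  exact (ulbAut_hasBasis_nhds_one X 𝔅).comap _

theorem ulbAut_subgroup_SIN_general {X : Type*} [UniformSpace X] {𝔅 : Set (Set X)}
    (G : Subgroup ↥(ulbAut X 𝔅))
    (hU : ∀ E ∈ uniformity X, ∃ F ∈ uniformity X, F ⊆ E ∧
      ∀ g ∈ G, (fun p : X × X => ((g.1 : X → X) p.1, (g.1 : X → X) p.2)) '' F = F)
    (hB : ∀ A ∈ 𝔅, ∃ B ∈ 𝔅, A ⊆ B ∧ ∀ g ∈ G, (g.1 : X → X) '' B = B) :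
    ∀ U ∈ nhds (1 : ↥G), ∃ V ∈ nhds (1 : ↥G), V ⊆ U ∧
      ∀ g : ↥G, (fun k => g * k * g⁻¹) '' V = V := by
  have hbasis := ulbAut_subgroup_hasBasis_nhds_one G
  intro U hUnhds
  obtain ⟨⟨T, E⟩, ⟨hT, hT𝔅, hE⟩, hTEU⟩ := hbasis.mem_iff.1 hUnhds
  obtain ⟨F, hF, hFE, hFinv⟩ := hU E hE
  choose! B hB𝔅 hAB hBinv using hB
  have hTB : ⋃₀ T ⊆ ⋃₀ (B '' T) := sUnion_subset fun A hA =>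
    (hAB A (hT𝔅 hA)).trans (subset_sUnion_of_mem (mem_image_of_mem B hA))
  have hUnionInv : ∀ g ∈ G, (g.1 : X → X) '' ⋃₀ (B '' T) = ⋃₀ (B '' T) := fun g hg => by
    rw [sUnion_image, image_iUnion₂]
    exact iUnion₂_congr fun A hA => hBinv A (hT𝔅 hA) g hg
  refine ⟨_, hbasis.mem_of_mem (i := (B '' T, F))
      ⟨hT.image B, image_subset_iff.2 fun A hA => hB𝔅 A (hT𝔅 hA), hF⟩,
    fun g hg => hTEU (biconvSet_mono hTB hFE hg), image_conj_eq_of_forall_conj_mem ?_⟩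
  intro g k hk
  have hconj : _ ∈ biconvSet (g.1.1 '' ⋃₀ (B '' T)) (Prod.map _ _ '' F) :=
    conj_mem_biconvSet g.1.1 hk
  have hFg : Prod.map g.1.1 g.1.1 '' F = F := hFinv g g.2
  rwa [hUnionInv g g.2, hFg] at hconj

/-- If a subgroup `G` of `ulbAut X 𝔅` is such that the uniform structure admits a
basis of `G`-invariant entourages and the bornology a basis of `G`-invariant
bounded sets, then `G` is SIN: it admits a basis of conjugation-invariant identity
neighborhoods. -/
theorem ulbAut_subgroup_SIN {X : Type*} [UniformSpace X] {𝔅 : Set (Set X)}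
    (h : IsULB X 𝔅) (G : Subgroup ↥(ulbAut X 𝔅))
    (hU : ∀ E ∈ uniformity X, ∃ F ∈ uniformity X, F ⊆ E ∧
      ∀ g ∈ G, (fun p : X × X => ((g.1 : X → X) p.1, (g.1 : X → X) p.2)) '' F = F)
    (hB : ∀ A ∈ 𝔅, ∃ B ∈ 𝔅, A ⊆ B ∧ ∀ g ∈ G, (g.1 : X → X) '' B = B) :
    ∀ U ∈ nhds (1 : ↥G), ∃ V ∈ nhds (1 : ↥G), V ⊆ U ∧
      ∀ g : ↥G, (fun k => g * k * g⁻¹) '' V = V :=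
  ulbAut_subgroup_SIN_general G hU hB
end

section
/- If X is a non-Archimedean uniformly locally bounded space (the uniform structure has a basis of entourages E with E ∘ E = E), then the uniform structure of biconvergence on bounded sets on Autulb(X) is non-Archimedean; in particular Autulb(X) is a 0-dimensional topological group. -/
/-!
An idempotent entourage is reflexive and transitive, and its symmetrization is again an entourage,
so a uniformity has a basis of idempotent entourages exactly when it has a basis of equivalence
relations (`IsUltraUniformity`). This property passes to pullbacks, infima and products, and to
uniform convergence, since `{(f, g) | ∀ x, (f x, g x) ∈ V}` is an equivalence relation whenever
`V` is. Biconvergence on bounded sets is the pullback along `g ↦ (g, g⁻¹)` of a product of two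
structures of uniform convergence on the members of `𝔅`, and balls of an equivalence-relation
entourage are clopen.
-/
open Filter Set UniformConvergence

open scoped Uniformity

section

variable {α β : Type*}

theorem isUltraUniformity_iff_exists_comp_eq_self [UniformSpace α] :
    IsUltraUniformity α ↔ ∀ E ∈ 𝓤 α, ∃ F ∈ 𝓤 α, F ⊆ E ∧ SetRel.comp F F = F := by
  constructor
  · intro _ E hE
    obtain ⟨F, ⟨hF, -, _⟩, hFE⟩ := IsUltraUniformity.hasBasis.mem_iff.mp hE
    have := isRefl_of_mem_uniformity hF
    exact ⟨F, hF, hFE, SetRel.comp_eq_self⟩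
  · intro h
    refine ⟨(𝓤 α).basis_sets.to_hasBasis (fun E hE => ?_) fun F hF => ⟨F, hF.1, subset_rfl⟩⟩
    obtain ⟨F, hF, hFE, hFF⟩ := h E hE
    have : SetRel.IsTrans F := SetRel.isTrans_iff_comp_subset_self.mpr hFF.subset
    exact ⟨SetRel.symmetrize F, ⟨symmetrize_mem_uniformity hF, inferInstance, inferInstance⟩,
      SetRel.symmetrize_subset_self.trans hFE⟩

namespace UniformFun

instance isSymm_gen {V : SetRel β β} [V.IsSymm] :
    SetRel.IsSymm (UniformFun.gen α β V) where
  symm _ _ h x := V.symm (h x)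

instance isTrans_gen {V : SetRel β β} [V.IsTrans] :
    SetRel.IsTrans (UniformFun.gen α β V) where
  trans _ _ _ h h' x := V.trans (h x) (h' x)

end UniformFun

instance IsUltraUniformity.uniformFun [UniformSpace β] [IsUltraUniformity β] :
    IsUltraUniformity (α →ᵤ β) :=
  .mk_of_hasBasis (UniformFun.hasBasis_uniformity_of_basis α β IsUltraUniformity.hasBasis)
    (fun V ⟨_, _, _⟩ => UniformFun.isSymm_gen (V := V))
    fun V ⟨_, _, _⟩ => UniformFun.isTrans_gen (V := V)

instance IsUltraUniformity.uniformOnFun [UniformSpace β] [IsUltraUniformity β]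
    (𝔖 : Set (Set α)) : IsUltraUniformity (α →ᵤ[𝔖] β) := by
  have hinf : UniformOnFun.uniformSpace α β 𝔖 = ⨅ s : 𝔖,
      .comap (UniformFun.ofFun ∘ (s : Set α).domRestrict ∘ UniformOnFun.toFun 𝔖)
        (UniformFun.uniformSpace s β) :=
    iInf_subtype'
  rw [hinf]
  exact .iInf fun _ => .comap inferInstance _

end

instance IsUltraUniformity.ulbAut {X : Type*} [UniformSpace X] [IsUltraUniformity X]
    (𝔅 : Set (Set X)) : IsUltraUniformity (ulbAut X 𝔅) := by
  unfold ulbAutUniformSpace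
  exact .comap inferInstance _

theorem ulbAut_nonArchimedean_general {X : Type*} [UniformSpace X] {𝔅 : Set (Set X)}
    (hNA : ∀ E ∈ uniformity X, ∃ F ∈ uniformity X, F ⊆ E ∧ SetRel.comp F F = F) :
    (∀ E ∈ uniformity ↥(ulbAut X 𝔅), ∃ F ∈ uniformity ↥(ulbAut X 𝔅),
      F ⊆ E ∧ SetRel.comp F F = F) ∧
    (∀ g : ↥(ulbAut X 𝔅), ∀ U ∈ nhds g, ∃ V ∈ nhds g, V ⊆ U ∧ IsClopen V) := by
  have : IsUltraUniformity X := isUltraUniformity_iff_exists_comp_eq_self.mpr hNA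
  refine ⟨isUltraUniformity_iff_exists_comp_eq_self.mp inferInstance, fun g U hU => ?_⟩
  obtain ⟨V, ⟨hgV, hV⟩, hVU⟩ := (UniformSpace.nhds_basis_clopens g).mem_iff.mp hU
  exact ⟨V, hV.isOpen.mem_nhds hgV, hVU, hV⟩

/-- If `X` is a non-Archimedean uniformly locally bounded space, then the uniform
structure of biconvergence on bounded sets on `ulbAut X 𝔅` is non-Archimedean; in
particular `ulbAut X 𝔅` is 0-dimensional. -/
theorem ulbAut_nonArchimedean {X : Type*} [UniformSpace X] {𝔅 : Set (Set X)}
    (h : IsULB X 𝔅)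
    (hNA : ∀ E ∈ uniformity X, ∃ F ∈ uniformity X, F ⊆ E ∧ SetRel.comp F F = F) :
    (∀ E ∈ uniformity ↥(ulbAut X 𝔅), ∃ F ∈ uniformity ↥(ulbAut X 𝔅),
      F ⊆ E ∧ SetRel.comp F F = F) ∧
    (∀ g : ↥(ulbAut X 𝔅), ∀ U ∈ nhds g, ∃ V ∈ nhds g, V ⊆ U ∧ IsClopen V) :=
  ulbAut_nonArchimedean_general hNA
end

section
/- Let X be a topological group with its standard (coarse) bornology, endowed with any one of its left, right, upper, or lower (Roelcke) uniform structures. Then X is uniformly locally bounded if and only if X admits a bounded identity neighborhood. -/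
open Filter Set Pointwise

def CoarselyBdd (X : Type*) [Group X] [TopologicalSpace X] (A : Set X) : Prop :=
  ∀ V : ℕ → Set X, (∀ n, IsOpen (V n)) → (∀ n, V n ⊆ V (n + 1)) →
    (∀ n, V n * V n ⊆ V (n + 1)) → (⋃ n, V n) = Set.univ → ∃ k, A ⊆ V k

/-! Each of the four uniform structures has a basic entourage `E_V` whose image `E_V[B]` is
squeezed between a neighbourhood of the identity (for `B = {1}`) and a product of `B` with
copies of `V` and `V⁻¹`. Since the coarse bornology contains the singletons and is stable under
products and inversion, uniform local boundedness is equivalent to the boundedness of one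
identity neighbourhood in all four cases. -/

namespace CoarselyBdd

variable {X : Type*} [Group X] [TopologicalSpace X]

theorem mono {A B : Set X} (hAB : A ⊆ B) (hB : CoarselyBdd X B) : CoarselyBdd X A :=
  fun V hopen hmono hmul hcover => (hB V hopen hmono hmul hcover).imp fun _ hk => hAB.trans hk

theorem singleton (x : X) : CoarselyBdd X {x} := by
  intro V _ _ _ hcover
  obtain ⟨k, hk⟩ := mem_iUnion.mp (hcover ▸ mem_univ x : x ∈ ⋃ n, V n)
  exact ⟨k, singleton_subset_iff.mpr hk⟩

theorem mul {A B : Set X} (hA : CoarselyBdd X A) (hB : CoarselyBdd X B) :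
    CoarselyBdd X (A * B) := by
  intro V hopen hmono hmul hcover
  have hV : Monotone V := monotone_nat_of_le_succ hmono
  obtain ⟨k, hk⟩ := hA V hopen hmono hmul hcover
  obtain ⟨m, hm⟩ := hB V hopen hmono hmul hcover
  exact ⟨max k m + 1, (mul_subset_mul (hk.trans (hV (le_max_left k m)))
    (hm.trans (hV (le_max_right k m)))).trans (hmul (max k m))⟩

theorem inv [ContinuousInv X] {A : Set X} (hA : CoarselyBdd X A) : CoarselyBdd X A⁻¹ := by
  intro V hopen hmono hmul hcover
  have hV : Monotone V := monotone_nat_of_le_succ hmono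
  -- Test `A` against the symmetrised chain `V n ∩ (V n)⁻¹`.
  let W : ℕ → Set X := fun n => V n ∩ (V n)⁻¹
  have hWopen : ∀ n, IsOpen (W n) := fun n => (hopen n).inter (hopen n).inv
  have hWmono : ∀ n, W n ⊆ W (n + 1) := fun n =>
    inter_subset_inter (hmono n) (inv_subset_inv.mpr (hmono n))
  have hWmul : ∀ n, W n * W n ⊆ W (n + 1) := by
    rintro n _ ⟨a, ha, b, hb, rfl⟩
    refine ⟨hmul n (mul_mem_mul ha.1 hb.1), ?_⟩
    rw [Set.mem_inv, mul_inv_rev]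
    exact hmul n (mul_mem_mul hb.2 ha.2)
  have hWcover : (⋃ n, W n) = univ := by
    refine eq_univ_of_forall fun x => mem_iUnion.mpr ?_
    obtain ⟨k, hk⟩ := mem_iUnion.mp (hcover ▸ mem_univ x : x ∈ ⋃ n, V n)
    obtain ⟨m, hm⟩ := mem_iUnion.mp (hcover ▸ mem_univ x⁻¹ : x⁻¹ ∈ ⋃ n, V n)
    exact ⟨max k m, hV (le_max_left k m) hk, hV (le_max_right k m) hm⟩
  obtain ⟨k, hk⟩ := hA W hWopen hWmono hWmul hWcover
  exact ⟨k, fun a ha => inv_inv a ▸ (hk ha).2⟩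

end CoarselyBdd

section UniformlyLocallyBdd

/-- `E V B` stands for the image `E_V[B]` of `B` under the basic entourage indexed by `V`. -/
def UniformlyLocallyBdd (X : Type*) [Group X] [TopologicalSpace X]
    (E : Set X → Set X → Set X) : Prop :=
  ∃ V ∈ nhds (1 : X), ∀ B : Set X, CoarselyBdd X B → CoarselyBdd X (E V B)

variable {X : Type*} [Group X] [TopologicalSpace X]

theorem uniformlyLocallyBdd_iff_exists_coarselyBdd_nhds (E : Set X → Set X → Set X)
    (hE_nhds : ∀ V ∈ nhds (1 : X), E V {1} ∈ nhds (1 : X))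
    (hE_bdd : ∀ U B, CoarselyBdd X U → CoarselyBdd X B → CoarselyBdd X (E U B)) :
    UniformlyLocallyBdd X E ↔ ∃ U ∈ nhds (1 : X), CoarselyBdd X U :=
  ⟨fun ⟨V, hV, hE⟩ => ⟨E V {1}, hE_nhds V hV, hE {1} (CoarselyBdd.singleton 1)⟩,
    fun ⟨U, hU, hUbdd⟩ => ⟨U, hU, fun _ hB => hE_bdd U _ hUbdd hB⟩⟩

theorem uniformlyLocallyBdd_left_iff :
    UniformlyLocallyBdd X (fun V B => {y | ∃ x ∈ B, x⁻¹ * y ∈ V}) ↔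
      ∃ U ∈ nhds (1 : X), CoarselyBdd X U := by
  refine uniformlyLocallyBdd_iff_exists_coarselyBdd_nhds _
    (fun V hV => mem_of_superset hV fun y hy => ⟨1, rfl, by simpa using hy⟩)
    (fun U B hU hB => (hB.mul hU).mono ?_)
  rintro y ⟨x, hx, hxy⟩
  exact ⟨x, hx, x⁻¹ * y, hxy, mul_inv_cancel_left x y⟩

variable [IsTopologicalGroup X]

theorem uniformlyLocallyBdd_right_iff :
    UniformlyLocallyBdd X (fun V B => {y | ∃ x ∈ B, x * y⁻¹ ∈ V}) ↔
      ∃ U ∈ nhds (1 : X), CoarselyBdd X U := by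
  refine uniformlyLocallyBdd_iff_exists_coarselyBdd_nhds _
    (fun V hV => mem_of_superset (inv_mem_nhds_one X hV) fun y hy =>
      ⟨1, rfl, by simpa using hy⟩)
    (fun U B hU hB => (hU.inv.mul hB).mono ?_)
  rintro y ⟨x, hx, hxy⟩
  exact ⟨(x * y⁻¹)⁻¹, by simpa using hxy, x, hx, by group⟩

theorem uniformlyLocallyBdd_sup_iff :
    UniformlyLocallyBdd X (fun V B => {y | ∃ x ∈ B, x⁻¹ * y ∈ V ∧ x * y⁻¹ ∈ V}) ↔
      ∃ U ∈ nhds (1 : X), CoarselyBdd X U := by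
  refine uniformlyLocallyBdd_iff_exists_coarselyBdd_nhds _
    (fun V hV => mem_of_superset (inter_mem hV (inv_mem_nhds_one X hV)) fun y hy =>
      ⟨1, rfl, by simpa using hy.1, by simpa using hy.2⟩)
    (fun U B hU hB => (hB.mul hU).mono ?_)
  rintro y ⟨x, hx, hxy, -⟩
  exact ⟨x, hx, x⁻¹ * y, hxy, mul_inv_cancel_left x y⟩

theorem uniformlyLocallyBdd_inf_iff :
    UniformlyLocallyBdd X (fun V B => {y | ∃ x ∈ B, x ∈ V * {y} * V}) ↔
      ∃ U ∈ nhds (1 : X), CoarselyBdd X U := by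
  refine uniformlyLocallyBdd_iff_exists_coarselyBdd_nhds _ (fun V hV => ?_)
    (fun U B hU hB => ((hU.inv.mul hB).mul hU.inv).mono ?_)
  · have h1V : (1 : X) ∈ V := mem_of_mem_nhds hV
    exact mem_of_superset (inv_mem_nhds_one X hV) fun y hy =>
      ⟨1, rfl, y⁻¹ * y, ⟨y⁻¹, hy, y, rfl, rfl⟩, 1, h1V, by group⟩
  · rintro y ⟨x, hx, _, ⟨v, hv, y', hy', rfl⟩, w, hw, hxvyw⟩
    rw [mem_singleton_iff] at hy'
    subst hy'
    exact ⟨v⁻¹ * x, ⟨v⁻¹, by simpa using hv, x, hx, rfl⟩, w⁻¹, by simpa using hw,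
      by rw [← hxvyw]; group⟩

end UniformlyLocallyBdd

/-- A topological group, endowed with any one of its left, right, upper, or lower
(Roelcke) uniform structures and its standard bornology, is uniformly locally
bounded if and only if it admits a bounded identity neighborhood. In each case the
uniformly-locally-bounded condition is spelled out via the generating entourages:
`V^L[B] = {y | ∃ x ∈ B, x⁻¹ * y ∈ V}`, `V^R[B] = {y | ∃ x ∈ B, x * y⁻¹ ∈ V}`,
`V^∨[B]`, and `V^∧[B] = {y | ∃ x ∈ B, x ∈ V * {y} * V}`. -/
theorem ulb_iff_locally_bounded {X : Type*} [Group X] [TopologicalSpace X]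
    [IsTopologicalGroup X] :
    ((∃ V ∈ nhds (1 : X), ∀ B : Set X, CoarselyBdd X B →
        CoarselyBdd X {y | ∃ x ∈ B, x⁻¹ * y ∈ V}) ↔
      ∃ U ∈ nhds (1 : X), CoarselyBdd X U) ∧
    ((∃ V ∈ nhds (1 : X), ∀ B : Set X, CoarselyBdd X B →
        CoarselyBdd X {y | ∃ x ∈ B, x * y⁻¹ ∈ V}) ↔
      ∃ U ∈ nhds (1 : X), CoarselyBdd X U) ∧
    ((∃ V ∈ nhds (1 : X), ∀ B : Set X, CoarselyBdd X B →
        CoarselyBdd X {y | ∃ x ∈ B, x⁻¹ * y ∈ V ∧ x * y⁻¹ ∈ V}) ↔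
      ∃ U ∈ nhds (1 : X), CoarselyBdd X U) ∧
    ((∃ V ∈ nhds (1 : X), ∀ B : Set X, CoarselyBdd X B →
        CoarselyBdd X {y | ∃ x ∈ B, x ∈ V * {y} * V}) ↔
      ∃ U ∈ nhds (1 : X), CoarselyBdd X U) :=
  ⟨uniformlyLocallyBdd_left_iff, uniformlyLocallyBdd_right_iff, uniformlyLocallyBdd_sup_iff,
    uniformlyLocallyBdd_inf_iff⟩
end

section
/- Let X be a locally bounded coarsely SIN topological group. Then the lower and upper topologies on Aut(X) coincide. -/
/-!
A bound `a b⁻¹ ∈ V` gives `a ∈ V b V`, so the upper uniformity is always finer than the lower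
one. Conversely, fix `g` and a bounded set `B`. The points `g x` and `g⁻¹ x`, `x ∈ B`, form a
bounded set, on which conjugation is equicontinuous at `1` by the coarse SIN property. Hence if
`g x = w₁ (h x) w₂` with `w₁, w₂` small, then `(g x)⁻¹ (h x)` and `(g x) (h x)⁻¹` are small too,
so every upper neighbourhood of `g` contains a lower one.
-/

open Filter Set Pointwise

set_option linter.unusedVariables false

/-- The group of bicontinuous automorphisms of a topological group `X`. -/
def contAut (X : Type*) [Group X] [TopologicalSpace X] : Subgroup (MulAut X) where
  carrier := {f | Continuous ⇑f ∧ Continuous ⇑f.symm}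
  one_mem' := ⟨continuous_id, continuous_id⟩
  mul_mem' := fun {a b} ha hb => ⟨ha.1.comp hb.1, hb.2.comp ha.2⟩
  inv_mem' := fun {a} ha => ⟨ha.2, ha.1⟩

/-- The uniform structure (given as a uniformity filter) of uniform biconvergence on
bounded sets on `contAut X` with respect to the *upper* uniform structure of `X`,
whose entourages are generated by `{(x,y) | x⁻¹ * y ∈ V ∧ x * y⁻¹ ∈ V}`. -/
def upperBiUniformity (X : Type*) [Group X] [TopologicalSpace X] :
    Filter (↥(contAut X) × ↥(contAut X)) :=
  ⨅ (B : Set X) (_ : CoarselyBdd X B) (V : Set X) (_ : V ∈ nhds (1 : X)),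
    Filter.principal {p | ∀ x ∈ B,
      ((p.1.1 x)⁻¹ * p.2.1 x ∈ V ∧ p.1.1 x * (p.2.1 x)⁻¹ ∈ V) ∧
      ((p.1.1.symm x)⁻¹ * p.2.1.symm x ∈ V ∧ p.1.1.symm x * (p.2.1.symm x)⁻¹ ∈ V)}

/-- The uniform structure (given as a uniformity filter) of uniform biconvergence on
bounded sets on `contAut X` with respect to the *lower (Roelcke)* uniform structure
of `X`, whose entourages are generated by `{(x,y) | x ∈ V * {y} * V}`. -/
def lowerBiUniformity (X : Type*) [Group X] [TopologicalSpace X] :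
    Filter (↥(contAut X) × ↥(contAut X)) :=
  ⨅ (B : Set X) (_ : CoarselyBdd X B) (V : Set X) (_ : V ∈ nhds (1 : X)),
    Filter.principal {p | ∀ x ∈ B,
      p.1.1 x ∈ V * {p.2.1 x} * V ∧ p.1.1.symm x ∈ V * {p.2.1.symm x} * V}

/-- The topology defined by a uniformity filter `U` on `G`. -/
def topOfUniformity {G : Type*} (U : Filter (G × G)) : TopologicalSpace G where
  IsOpen s := ∀ g ∈ s, {p : G × G | p.1 = g → p.2 ∈ s} ∈ U
  isOpen_univ := fun g _ => by simp
  isOpen_inter := by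
    intro s t hs ht g hg
    filter_upwards [hs g hg.1, ht g hg.2] with p h1 h2 he
    exact ⟨h1 he, h2 he⟩
  isOpen_sUnion := by
    intro S hS g hg
    obtain ⟨s, hsS, hgs⟩ := hg
    filter_upwards [hS s hsS g hgs] with p h he
    exact ⟨s, hsS, h he⟩


def CoarselySIN (X : Type*) [Group X] [TopologicalSpace X] : Prop :=
  ∀ U ∈ nhds (1 : X), ∀ B : Set X, CoarselyBdd X B →
    ∃ V ∈ nhds (1 : X), ∀ x ∈ B, ∀ v ∈ V, x * v * x⁻¹ ∈ U

namespace CoarselyBdd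

variable {X : Type*} [Group X] [TopologicalSpace X]

theorem empty : CoarselyBdd X ∅ := fun _ _ _ _ _ => ⟨0, empty_subset _⟩

theorem union {A B : Set X} (hA : CoarselyBdd X A) (hB : CoarselyBdd X B) :
    CoarselyBdd X (A ∪ B) := by
  intro V hopen hsucc hmul hcover
  obtain ⟨k, hk⟩ := hA V hopen hsucc hmul hcover
  obtain ⟨j, hj⟩ := hB V hopen hsucc hmul hcover
  have hV : Monotone V := monotone_nat_of_le_succ hsucc
  exact ⟨max k j, union_subset (hk.trans (hV (le_max_left k j)))
    (hj.trans (hV (le_max_right k j)))⟩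

theorem image {Y : Type*} [Group Y] [TopologicalSpace Y] {A : Set X} (φ : X →* Y)
    (hφ : Continuous φ) (hA : CoarselyBdd X A) : CoarselyBdd Y (φ '' A) := by
  intro V hopen hsucc hmul hcover
  obtain ⟨k, hk⟩ := hA (fun n => φ ⁻¹' V n) (fun n => (hopen n).preimage hφ)
    (fun n => preimage_mono (hsucc n))
    (by
      rintro n _ ⟨a, ha, b, hb, rfl⟩
      simpa only [mem_preimage, map_mul] using hmul n (mul_mem_mul ha hb))
    (by simp only [← preimage_iUnion, hcover, preimage_univ])
  exact ⟨k, image_subset_iff.mpr hk⟩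

end CoarselyBdd

section Entourages

variable {X : Type*} [Group X] [TopologicalSpace X]

def biEntourage (R : X → X → Prop) (B : Set X) : Set (contAut X × contAut X) :=
  {p | ∀ x ∈ B, R (p.1.1 x) (p.2.1 x) ∧ R (p.1.1.symm x) (p.2.1.symm x)}

theorem biEntourage_mono {R R' : X → X → Prop} {B B' : Set X} (hR : ∀ a b, R a b → R' a b)
    (hB : B' ⊆ B) : biEntourage R B ⊆ biEntourage R' B' :=
  fun _ hp x hx => (hp x (hB hx)).imp (hR _ _) (hR _ _)

theorem hasBasis_iInf_biEntourage (R : Set X → X → X → Prop)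
    (hR : ∀ ⦃V V'⦄, V ⊆ V' → ∀ a b, R V a b → R V' a b) :
    (⨅ (B : Set X) (_ : CoarselyBdd X B) (V : Set X) (_ : V ∈ nhds (1 : X)),
        𝓟 (biEntourage (R V) B)).HasBasis
      (fun i : Set X × Set X => CoarselyBdd X i.1 ∧ i.2 ∈ nhds (1 : X))
      (fun i => biEntourage (R i.2) i.1) := by
  have hbasis := hasBasis_biInf_principal'
    (p := fun i : Set X × Set X => CoarselyBdd X i.1 ∧ i.2 ∈ nhds (1 : X))
    (s := fun i => biEntourage (R i.2) i.1)
    (fun i hi j hj => ⟨(i.1 ∪ j.1, i.2 ∩ j.2), ⟨hi.1.union hj.1, inter_mem hi.2 hj.2⟩,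
      biEntourage_mono (hR inter_subset_left) subset_union_left,
      biEntourage_mono (hR inter_subset_right) subset_union_right⟩)
    ⟨(∅, univ), CoarselyBdd.empty, univ_mem⟩
  convert hbasis using 1
  simp only [iInf_prod, iInf_and]
  exact iInf_congr fun B => iInf_comm

end Entourages

section Comparison

variable {X : Type*} [Group X] [TopologicalSpace X]

theorem hasBasis_upperBiUniformity :
    (upperBiUniformity X).HasBasis
      (fun i : Set X × Set X => CoarselyBdd X i.1 ∧ i.2 ∈ nhds (1 : X))
      (fun i => biEntourage (fun a b => a⁻¹ * b ∈ i.2 ∧ a * b⁻¹ ∈ i.2) i.1) :=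
  hasBasis_iInf_biEntourage (fun V a b => a⁻¹ * b ∈ V ∧ a * b⁻¹ ∈ V)
    fun _ _ hV _ _ h => h.imp (@hV _) (@hV _)

theorem hasBasis_lowerBiUniformity :
    (lowerBiUniformity X).HasBasis
      (fun i : Set X × Set X => CoarselyBdd X i.1 ∧ i.2 ∈ nhds (1 : X))
      (fun i => biEntourage (fun a b => a ∈ i.2 * {b} * i.2) i.1) :=
  hasBasis_iInf_biEntourage (fun V a b => a ∈ V * ({b} : Set X) * V)
    fun _ _ hV _ _ h => mul_subset_mul (mul_subset_mul hV subset_rfl) hV h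

omit [TopologicalSpace X] in
theorem mem_mul_singleton_mul_of_mul_inv_mem {V : Set X} {a b : X} (h1 : (1 : X) ∈ V)
    (h : a * b⁻¹ ∈ V) : a ∈ V * {b} * V := by
  simpa using mul_mem_mul (mul_mem_mul h (mem_singleton b)) h1

theorem upperBiUniformity_le_lowerBiUniformity : upperBiUniformity X ≤ lowerBiUniformity X :=
  hasBasis_upperBiUniformity.le_basis_iff hasBasis_lowerBiUniformity |>.mpr fun i hi =>
    ⟨i, hi, biEntourage_mono
      (fun _ _ h => mem_mul_singleton_mul_of_mul_inv_mem (mem_of_mem_nhds hi.2) h.2)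
      subset_rfl⟩

omit [TopologicalSpace X] in
/-- If `a = w₁ b w₂`, then `a⁻¹ b = (a⁻¹ w₁ a)⁻¹ w₂⁻¹` and `a b⁻¹ = (a w₂ a⁻¹) w₁`. -/
theorem inv_mul_mem_and_mul_inv_mem_of_mem_mul_singleton_mul {U W : Set X} {a b : X}
    (hU : U⁻¹ = U) (hWU : W ⊆ U) (hconj : ∀ w ∈ W, a * w * a⁻¹ ∈ U ∧ a⁻¹ * w * a ∈ U)
    (h : a ∈ W * {b} * W) : a⁻¹ * b ∈ U * U ∧ a * b⁻¹ ∈ U * U := by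
  obtain ⟨_, ⟨w₁, hw₁, c, hc, rfl⟩, w₂, hw₂, hab⟩ := h
  rw [mem_singleton_iff] at hc
  subst c
  have hb : b = w₁⁻¹ * a * w₂⁻¹ := by rw [← hab]; group
  have hinv : ∀ {u}, u ∈ U → u⁻¹ ∈ U := fun hu => hU ▸ inv_mem_inv.mpr hu
  constructor
  · rw [show a⁻¹ * b = (a⁻¹ * w₁ * a)⁻¹ * w₂⁻¹ by rw [hb]; group]
    exact mul_mem_mul (hinv (hconj w₁ hw₁).2) (hinv (hWU hw₂))
  · rw [show a * b⁻¹ = a * w₂ * a⁻¹ * w₁ by rw [hb]; group]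
    exact mul_mem_mul (hconj w₂ hw₂).1 (hWU hw₁)

theorem CoarselySIN.exists_nhds_roelcke_subset_upper [IsTopologicalGroup X]
    (hX : CoarselySIN X) {D : Set X} (hD : CoarselyBdd X D) {V : Set X}
    (hV : V ∈ nhds (1 : X)) :
    ∃ W ∈ nhds (1 : X), ∀ a ∈ D, ∀ b, a ∈ W * {b} * W → a⁻¹ * b ∈ V ∧ a * b⁻¹ ∈ V := by
  obtain ⟨U, hU, -, hUinv, hUV⟩ := exists_closed_nhds_one_inv_eq_mul_subset hV
  obtain ⟨W, hW, hconj⟩ := hX U hU (D ∪ D⁻¹) (hD.union hD.inv)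
  refine ⟨W ∩ U, inter_mem hW hU, fun a ha b hab => ?_⟩
  have key := inv_mul_mem_and_mul_inv_mem_of_mem_mul_singleton_mul hUinv inter_subset_right
    (fun w hw => ⟨hconj a (Or.inl ha) w hw.1, by
      simpa using hconj a⁻¹ (Or.inr (inv_mem_inv.mpr ha)) w hw.1⟩) hab
  exact ⟨hUV key.1, hUV key.2⟩

theorem CoarselySIN.comap_lowerBiUniformity_le [IsTopologicalGroup X] (hX : CoarselySIN X)
    (g : contAut X) :
    (lowerBiUniformity X).comap (Prod.mk g) ≤ (upperBiUniformity X).comap (Prod.mk g) := by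
  refine (hasBasis_lowerBiUniformity.comap _).le_basis_iff (hasBasis_upperBiUniformity.comap _)
    |>.mpr fun ⟨B, V⟩ ⟨hB, hV⟩ => ?_
  have hgB : CoarselyBdd X (g.1 '' B ∪ g.1.symm '' B) :=
    (hB.image g.1.toMonoidHom g.2.1).union (hB.image g.1.symm.toMonoidHom g.2.2)
  obtain ⟨W, hW, hWV⟩ := hX.exists_nhds_roelcke_subset_upper hgB hV
  exact ⟨(B, W), ⟨hB, hW⟩, fun h hh x hx =>
    ⟨hWV _ (Or.inl ⟨x, hx, rfl⟩) _ (hh x hx).1, hWV _ (Or.inr ⟨x, hx, rfl⟩) _ (hh x hx).2⟩⟩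

end Comparison

theorem topOfUniformity_eq_of_comap_eq {G : Type*} {U L : Filter (G × G)}
    (h : ∀ g, U.comap (Prod.mk g) = L.comap (Prod.mk g)) :
    topOfUniformity U = topOfUniformity L := by
  ext s
  show (∀ g ∈ s, _ ∈ U) ↔ (∀ g ∈ s, _ ∈ L)
  simp only [← mem_comap_prodMk, h]

theorem lower_eq_upper_topology_of_coarselySIN_general {X : Type*} [Group X]
    [TopologicalSpace X] [IsTopologicalGroup X]
    (hcsin : ∀ U ∈ nhds (1 : X), ∀ B : Set X, CoarselyBdd X B →
      ∃ V ∈ nhds (1 : X), ∀ x ∈ B, ∀ v ∈ V, x * v * x⁻¹ ∈ U) :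
    topOfUniformity (upperBiUniformity X) = topOfUniformity (lowerBiUniformity X) :=
  topOfUniformity_eq_of_comap_eq fun g =>
    (comap_mono upperBiUniformity_le_lowerBiUniformity).antisymm
      (CoarselySIN.comap_lowerBiUniformity_le hcsin g)

/-- For a locally bounded coarsely SIN topological group `X`, the lower and upper
topologies (of uniform biconvergence on bounded sets w.r.t. the lower resp. upper
uniform structures of `X`) on the automorphism group coincide. -/
theorem lower_eq_upper_topology_of_coarselySIN {X : Type*} [Group X]
    [TopologicalSpace X] [IsTopologicalGroup X]
    (hlb : ∃ U ∈ nhds (1 : X), CoarselyBdd X U)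
    (hcsin : ∀ U ∈ nhds (1 : X), ∀ B : Set X, CoarselyBdd X B →
      ∃ V ∈ nhds (1 : X), ∀ x ∈ B, ∀ v ∈ V, x * v * x⁻¹ ∈ U) :
    topOfUniformity (upperBiUniformity X) = topOfUniformity (lowerBiUniformity X) :=
  lower_eq_upper_topology_of_coarselySIN_general hcsin
end
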